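/- arXiv:1110.4886 — 2 statements merged into one kernel-verified Lean document; each statement's English description precedes it below -/
import Mathlib

section
/- For ω ∈ ℂ \ ℝ, the doubly-indexed sum ∑_{(m,n) ∈ ℤ² \ {(0,0),(−1,0)}} (1/(m+nω)² − 1/(m+1+nω)²) equals 0. -/
/-!
Since `z ↦ 1/z²` is even, the involution `z ↦ -1 - z` of the lattice points `z = m + nω`,
i.e. `(m, n) ↦ (-1 - m, -n)`, preserves the index set and interchanges `1/z²` with
`1/(z + 1)²`, so it negates every summand. Hence the sum equals its own negative.
-/

theorem Equiv.tsum_eq_zero_of_comp_eq_neg {α β : Type*} [AddCommGroup α] [TopologicalSpace α]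
    [IsTopologicalAddGroup α] [T2Space α] [IsAddTorsionFree α] (e : β ≃ β) {f : β → α}
    (hf : ∀ b, f (e b) = -f b) : ∑' b, f b = 0 := by
  refine self_eq_neg.mp ?_
  calc ∑' b, f b = ∑' b, f (e b) := (e.tsum_eq f).symm
    _ = ∑' b, -f b := tsum_congr hf
    _ = -∑' b, f b := tsum_neg

def reflectionPuncturedLattice :
    {q : ℤ × ℤ // q ≠ (0, 0) ∧ q ≠ (-1, 0)} ≃ {q : ℤ × ℤ // q ≠ (0, 0) ∧ q ≠ (-1, 0)} :=
  (Equiv.subLeft ((-1, 0) : ℤ × ℤ)).subtypeEquiv fun q => by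
    simp only [Equiv.subLeft_apply, ne_eq, Prod.ext_iff, Prod.fst_sub, Prod.snd_sub]
    omega

theorem coe_reflectionPuncturedLattice (q : {q : ℤ × ℤ // q ≠ (0, 0) ∧ q ≠ (-1, 0)}) :
    (reflectionPuncturedLattice q : ℤ × ℤ) = (-1 - q.1.1, -q.1.2) :=
  Prod.ext rfl (zero_sub _)

theorem inv_sq_sub_inv_add_one_sq_neg_sub_one {K : Type*} [Field K] (ω : K) (m n : ℤ) :
    1 / (((-1 - m : ℤ) : K) + ((-n : ℤ) : K) * ω) ^ 2
        - 1 / (((-1 - m : ℤ) : K) + 1 + ((-n : ℤ) : K) * ω) ^ 2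
      = -(1 / ((m : K) + (n : K) * ω) ^ 2 - 1 / ((m : K) + 1 + (n : K) * ω) ^ 2) := by
  have h₁ : ((-1 - m : ℤ) : K) + ((-n : ℤ) : K) * ω = -((m : K) + 1 + (n : K) * ω) := by
    push_cast; ring
  have h₂ : ((-1 - m : ℤ) : K) + 1 + ((-n : ℤ) : K) * ω = -((m : K) + (n : K) * ω) := by
    push_cast; ring
  rw [h₁, h₂, neg_sq, neg_sq]
  ring

theorem double_sum_vanishes_general (ω : ℂ) :
    (∑' q : {q : ℤ × ℤ // q ≠ (0, 0) ∧ q ≠ (-1, 0)},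
        (1 / ((q.1.1 : ℂ) + (q.1.2 : ℂ) * ω) ^ 2
          - 1 / ((q.1.1 : ℂ) + 1 + (q.1.2 : ℂ) * ω) ^ 2)) = 0 :=
  reflectionPuncturedLattice.tsum_eq_zero_of_comp_eq_neg fun q => by
    rw [coe_reflectionPuncturedLattice]
    exact inv_sq_sub_inv_add_one_sq_neg_sub_one ω q.1.1 q.1.2

/-- For `ω ∉ ℝ`, the doubly-indexed sum
`∑_{(m,n) ∈ ℤ² \ {(0,0),(−1,0)}} (1/(m+nω)² − 1/(m+1+nω)²)` vanishes. -/
theorem double_sum_vanishes (ω : ℂ) (hω : ω.im ≠ 0) :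
    (∑' q : {q : ℤ × ℤ // q ≠ (0, 0) ∧ q ≠ (-1, 0)},
        (1 / ((q.1.1 : ℂ) + (q.1.2 : ℂ) * ω) ^ 2
          - 1 / ((q.1.1 : ℂ) + 1 + (q.1.2 : ℂ) * ω) ^ 2)) = 0 :=
  double_sum_vanishes_general ω
end

section
/- Let h be an entire function on ℂ such that z ↦ h(z + p_j) − h(z) is constant for j = 1, 2, where p₁, p₂ are ℝ-linearly independent. Then h is an affine function: h(z) = az + b for some a, b ∈ ℂ. -/
/-!
The derivative `h'` is periodic with respect to `p₁` and `p₂`, hence with respect to the lattice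
they span, so it takes all its values on a compact fundamental parallelogram. A bounded entire
function is constant by Liouville's theorem, so `h' = a` and `h z = a z + h 0`.
-/

open Function

theorem PeriodPair.isCompact_range_of_periodic {F : Type*} [TopologicalSpace F]
    (L : PeriodPair) {f : ℂ → F} (hf : Continuous f) (h₁ : Periodic f L.ω₁)
    (h₂ : Periodic f L.ω₂) : IsCompact (Set.range f) :=
  IsZLattice.isCompact_range_of_periodic L.lattice f hf fun z w hw => by
    obtain ⟨m, n, rfl⟩ := PeriodPair.mem_lattice.mp hw
    exact (h₁.int_mul m).add_period (h₂.int_mul n) z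

theorem periodic_deriv_of_forall_sub_eq_const {𝕜 F : Type*} [NontriviallyNormedField 𝕜]
    [NormedAddCommGroup F] [NormedSpace 𝕜 F] {f : 𝕜 → F} {p : 𝕜} {c : F}
    (hf : ∀ z, f (z + p) - f z = c) : Periodic (deriv f) p := fun z => by
  have hshift : (fun w => f (w + p)) = fun w => f w + c := funext fun w => by
    rw [← hf w, add_sub_cancel]
  rw [← deriv_comp_add_const, hshift, deriv_add_const]

theorem eq_smul_add_of_deriv_eq_const {𝕜 G : Type*} [RCLike 𝕜] [NormedAddCommGroup G]
    [NormedSpace 𝕜 G] {f : 𝕜 → G} {a : G} (hf : Differentiable 𝕜 f)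
    (hf' : ∀ x, deriv f x = a) (x : 𝕜) : f x = x • a + f 0 := by
  have hderiv : ∀ y, HasDerivAt (fun y => f y - y • a) 0 y := fun y => by
    convert (hf y).hasDerivAt.sub ((hasDerivAt_id y).smul_const a) using 1
    · rfl
    · rw [hf', one_smul, sub_self]
  have hconst := is_const_of_deriv_eq_zero (fun y => (hderiv y).differentiableAt)
    (fun y => (hderiv y).deriv) x 0
  rwa [sub_eq_iff_eq_add', zero_smul, sub_zero] at hconst

/-- An entire function `h` such that `h(z+pⱼ) − h(z)` is constant for two ℝ-linearly
independent periods is affine. -/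
theorem entire_quasi_periodic_affine
    (h : ℂ → ℂ) (hh : Differentiable ℂ h)
    (p₁ p₂ : ℂ) (hind : LinearIndependent ℝ ![p₁, p₂])
    (hc₁ : ∃ c₁ : ℂ, ∀ z, h (z + p₁) - h z = c₁)
    (hc₂ : ∃ c₂ : ℂ, ∀ z, h (z + p₂) - h z = c₂) :
    ∃ a b : ℂ, ∀ z, h z = a * z + b := by
  obtain ⟨c₁, hc₁⟩ := hc₁
  obtain ⟨c₂, hc₂⟩ := hc₂
  let L : PeriodPair := ⟨p₁, p₂, hind⟩
  have hbounded : Bornology.IsBounded (Set.range (deriv h)) :=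
    (L.isCompact_range_of_periodic hh.deriv.continuous
      (periodic_deriv_of_forall_sub_eq_const hc₁)
      (periodic_deriv_of_forall_sub_eq_const hc₂)).isBounded
  obtain ⟨a, ha⟩ := hh.deriv.exists_eq_const_of_bounded hbounded
  refine ⟨a, h 0, fun z => ?_⟩
  rw [eq_smul_add_of_deriv_eq_const hh (congrFun ha) z, smul_eq_mul, mul_comm]
end
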